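/- arXiv:1403.8000 — 5 statements merged into one kernel-verified Lean document; each statement's English description precedes it below -/
import Mathlib

section
/- Let φ: ℝ → ℝ be a smooth lift of a circle diffeomorphism (φ' > 0, φ(x+2π) = φ(x)+2π) and let ψ be its inverse (also a lift of a circle diffeomorphism). Then (1/2)∫₀^{2π} (S(φ) + 2(φ')² - 2)/φ' dθ = -(1/2)∫₀^{2π} (S(ψ) + 2(ψ')² - 2) dθ, where S denotes the Schwarzian derivative. -/
open Real intervalIntegral

/-- The Schwarzian derivative `S(f) = f'''/f' - (3/2)(f''/f')²`. -/
noncomputable def schwarzian (f : ℝ → ℝ) (x : ℝ) : ℝ :=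
  iteratedDeriv 3 f x / deriv f x - 3/2 * (iteratedDeriv 2 f x / deriv f x)^2

private lemma hasDerivAt_iteratedDeriv' (f : ℝ → ℝ) (hf : ContDiff ℝ (⊤ : ℕ∞) f) (n : ℕ) (x : ℝ) :
    HasDerivAt (iteratedDeriv n f) (iteratedDeriv (n+1) f x) x := by
  have h1 : Differentiable ℝ (iteratedDeriv n f) :=
    hf.differentiable_iteratedDeriv n (by exact_mod_cast ENat.coe_lt_top n)
  simpa [← iteratedDeriv_succ] using (h1 x).hasDerivAt

private lemma hasDerivAt_deriv' (f : ℝ → ℝ) (hf : ContDiff ℝ (⊤ : ℕ∞) f) (x : ℝ) :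
    HasDerivAt (deriv f) (iteratedDeriv 2 f x) x := by
  simpa [iteratedDeriv_one] using hasDerivAt_iteratedDeriv' f hf 1 x

private lemma per_deriv (f : ℝ → ℝ) (hf : ∀ θ, f (θ + 2*π) = f θ) (θ : ℝ) :
    deriv f (θ + 2*π) = deriv f θ := by
  rw [← deriv_comp_add_const]
  simp only [hf]

private lemma per_deriv_lift (f : ℝ → ℝ) (hf : ∀ θ, f (θ + 2*π) = f θ + 2*π) (θ : ℝ) :
    deriv f (θ + 2*π) = deriv f θ := by
  rw [← deriv_comp_add_const]
  simp only [hf, deriv_add_const]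

theorem energy_duality
    (φ ψ : ℝ → ℝ)
    (hφ : ContDiff ℝ (⊤ : ℕ∞) φ) (hφd : ∀ x, 0 < deriv φ x)
    (hφp : ∀ x, φ (x + 2*π) = φ x + 2*π)
    (hψ : ContDiff ℝ (⊤ : ℕ∞) ψ) (hψd : ∀ x, 0 < deriv ψ x)
    (hψp : ∀ x, ψ (x + 2*π) = ψ x + 2*π)
    (hleft : ∀ x, ψ (φ x) = x) (hright : ∀ x, φ (ψ x) = x) :
    (1/2) * ∫ θ in (0:ℝ)..(2*π),
        (schwarzian φ θ + 2 * (deriv φ θ)^2 - 2) / deriv φ θ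
      = -(1/2) * ∫ θ in (0:ℝ)..(2*π),
        (schwarzian ψ θ + 2 * (deriv ψ θ)^2 - 2) := by
  have hφdiff : Differentiable ℝ φ := hφ.differentiable (by simp)
  have hψdiff : Differentiable ℝ ψ := hψ.differentiable (by simp)
  have hφa : ∀ x, deriv φ x ≠ 0 := fun x => (hφd x).ne'
  -- first derivative of inverse
  have h1 : ∀ x, deriv ψ (φ x) * deriv φ x = 1 := by
    intro x
    have H : HasDerivAt (ψ ∘ φ) (deriv ψ (φ x) * deriv φ x) x :=
      (hψdiff (φ x)).hasDerivAt.comp x (hφdiff x).hasDerivAt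
    have H2 : (ψ ∘ φ) = id := funext hleft
    rw [H2] at H
    exact H.unique (hasDerivAt_id x)
  have hp : ∀ x, deriv ψ (φ x) = (deriv φ x)⁻¹ :=
    fun x => eq_inv_of_mul_eq_one_left (h1 x)
  -- second derivative of inverse
  have h2 : ∀ x, iteratedDeriv 2 ψ (φ x) = -(iteratedDeriv 2 φ x) / (deriv φ x)^3 := by
    intro x
    have ha := hφa x
    have HA : HasDerivAt (fun y => deriv ψ (φ y)) (iteratedDeriv 2 ψ (φ x) * deriv φ x) x :=
      (hasDerivAt_deriv' ψ hψ (φ x)).comp x (hφdiff x).hasDerivAt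
    have HB : HasDerivAt (fun y => (deriv φ y)⁻¹)
        (-(iteratedDeriv 2 φ x) / (deriv φ x)^2) x :=
      (hasDerivAt_deriv' φ hφ x).inv ha
    have HAeq : (fun y => deriv ψ (φ y)) = fun y => (deriv φ y)⁻¹ := funext hp
    rw [HAeq] at HA
    have hu := HA.unique HB
    rw [eq_div_iff (pow_ne_zero 2 ha)] at hu
    rw [eq_div_iff (pow_ne_zero 3 ha)]
    linear_combination hu
  -- third derivative of inverse
  have h3 : ∀ x, iteratedDeriv 3 ψ (φ x)
      = (3 * (iteratedDeriv 2 φ x)^2 - iteratedDeriv 3 φ x * deriv φ x) / (deriv φ x)^5 := by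
    intro x
    have ha := hφa x
    have HA : HasDerivAt (fun y => iteratedDeriv 2 ψ (φ y))
        (iteratedDeriv 3 ψ (φ x) * deriv φ x) x :=
      (hasDerivAt_iteratedDeriv' ψ hψ 2 (φ x)).comp x (hφdiff x).hasDerivAt
    have HBn : HasDerivAt (fun y => -(iteratedDeriv 2 φ y)) (-(iteratedDeriv 3 φ x)) x :=
      (hasDerivAt_iteratedDeriv' φ hφ 2 x).neg
    have HBd : HasDerivAt (fun y => (deriv φ y)^3)
        (3 * (deriv φ x)^2 * iteratedDeriv 2 φ x) x := by
      simpa using (hasDerivAt_deriv' φ hφ x).fun_pow 3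
    have HB := HBn.div HBd (pow_ne_zero 3 ha)
    have HAeq : (fun y => iteratedDeriv 2 ψ (φ y))
        = fun y => -(iteratedDeriv 2 φ y) / (deriv φ y)^3 := funext h2
    rw [HAeq] at HA
    have hu := HA.unique HB
    rw [eq_div_iff (pow_ne_zero 2 (pow_ne_zero 3 ha))] at hu
    rw [eq_div_iff (pow_ne_zero 5 ha)]
    apply mul_right_cancel₀ (pow_ne_zero 2 ha)
    linear_combination hu
  -- pointwise identity
  set g : ℝ → ℝ := fun θ => schwarzian ψ θ + 2 * (deriv ψ θ)^2 - 2 with hg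
  have key : ∀ x, (schwarzian φ x + 2 * (deriv φ x)^2 - 2) / deriv φ x
      = -(deriv φ x * g (φ x)) := by
    intro x
    have ha := hφa x
    simp only [hg, schwarzian, hp x, h2 x, h3 x]
    field_simp
    ring
  -- continuity of g
  have c1 : Continuous (deriv ψ) := hψ.continuous_deriv (by simp)
  have c2 : Continuous (iteratedDeriv 2 ψ) := hψ.continuous_iteratedDeriv 2 (WithTop.coe_le_coe.2 le_top : (((2:ℕ∞)) : WithTop ℕ∞) ≤ ((⊤ : ℕ∞) : WithTop ℕ∞))
  have c3 : Continuous (iteratedDeriv 3 ψ) := hψ.continuous_iteratedDeriv 3 (WithTop.coe_le_coe.2 le_top : (((3:ℕ∞)) : WithTop ℕ∞) ≤ ((⊤ : ℕ∞) : WithTop ℕ∞))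
  have hψa : ∀ x, deriv ψ x ≠ 0 := fun x => (hψd x).ne'
  have hg_cont : Continuous g := by
    simp only [hg, schwarzian]
    exact (((c3.div c1 hψa).sub (continuous_const.mul ((c2.div c1 hψa).pow 2))).add
      (continuous_const.mul (c1.pow 2))).sub continuous_const
  -- periodicity of g
  have hdper : ∀ θ, deriv ψ (θ + 2*π) = deriv ψ θ := per_deriv_lift ψ hψp
  have hd2per : ∀ θ, iteratedDeriv 2 ψ (θ + 2*π) = iteratedDeriv 2 ψ θ := by
    intro θ
    rw [show (iteratedDeriv 2 ψ) = deriv (deriv ψ) by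
      rw [iteratedDeriv_succ, iteratedDeriv_one]]
    exact per_deriv _ hdper θ
  have hd3per : ∀ θ, iteratedDeriv 3 ψ (θ + 2*π) = iteratedDeriv 3 ψ θ := by
    intro θ
    rw [show (iteratedDeriv 3 ψ) = deriv (iteratedDeriv 2 ψ) from iteratedDeriv_succ]
    exact per_deriv _ hd2per θ
  have hgper : Function.Periodic g (2*π) := by
    intro θ
    simp only [hg, schwarzian, hdper, hd2per, hd3per]
  -- change of variables
  have hcv : (∫ x in (0:ℝ)..(2*π), deriv φ x * g (φ x)) = ∫ u in (φ 0)..(φ (2*π)), g u := by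
    have := integral_comp_smul_deriv (a := (0:ℝ)) (b := 2*π) (f := φ) (f' := deriv φ) (g := g)
      (fun x _ => (hφdiff x).hasDerivAt) (hφ.continuous_deriv (by simp)).continuousOn hg_cont
    simpa [Function.comp, smul_eq_mul] using this
  have hend : φ (2*π) = φ 0 + 2*π := by
    have := hφp 0
    rwa [zero_add] at this
  have hshift : (∫ u in (φ 0)..(φ 0 + 2*π), g u) = ∫ u in (0:ℝ)..(2*π), g u := by
    have := hgper.intervalIntegral_add_eq (φ 0) 0
    simpa using this
  -- assemble
  have hmain : (∫ θ in (0:ℝ)..(2*π), (schwarzian φ θ + 2 * (deriv φ θ)^2 - 2) / deriv φ θ)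
      = -∫ θ in (0:ℝ)..(2*π), g θ := by
    calc (∫ θ in (0:ℝ)..(2*π), (schwarzian φ θ + 2 * (deriv φ θ)^2 - 2) / deriv φ θ)
        = ∫ θ in (0:ℝ)..(2*π), -(deriv φ θ * g (φ θ)) := by simp only [key]
      _ = -∫ θ in (0:ℝ)..(2*π), deriv φ θ * g (φ θ) := intervalIntegral.integral_neg
      _ = -∫ u in (φ 0)..(φ (2*π)), g u := by rw [hcv]
      _ = -∫ u in (0:ℝ)..(2*π), g u := by rw [hend, hshift]
  rw [hmain]
  ring
end

section
/- Let φ: ℝ → ℝ be a smooth lift of a circle diffeomorphism with S(φ) + 2(φ')² - 2 = 0 (i.e. φ is in the Möbius group of S¹), and let f: ℝ → ℝ be smooth and 2π-periodic. Define f_φ = (φ')^{-1/2} · (f ∘ φ). Then ∫₀^{2π} ((f_φ)')² - (f_φ)² dθ = ∫₀^{2π} (f')² - f² dθ. -/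
open Real intervalIntegral

/-- Key algebraic identity behind Möbius invariance of the Dirichlet energy. -/
lemma mobius_key_alg (F F' p q r s : ℝ) (hs : s^2 = p) (hs0 : s ≠ 0)
    (hr : r * p = 3/2*q^2 + 2*p^2 - 2*p^4) :
    ((F' * p * s - F * (q / (2 * s))) / p)^2 - (F / s)^2
      = (F'^2 - F^2) * p
        + (-(F * F' * q / p) - 1/2 * F^2 * ((r * p - 2 * q^2) / p^3)) := by
  subst hs
  have hr' : r = (3/2*q^2 + 2*s^4 - 2*s^8)/s^2 := by
    field_simp
    linarith [hr]
  rw [hr']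
  field_simp
  ring

theorem mobius_invariance_of_dirichlet_energy
    (φ : ℝ → ℝ) (hφ : ContDiff ℝ (⊤ : ℕ∞) φ)
    (hφd : ∀ x, 0 < deriv φ x)
    (hφp : ∀ x, φ (x + 2*π) = φ x + 2*π)
    (hmob : ∀ x, schwarzian φ x + 2 * (deriv φ x)^2 - 2 = 0)
    (f : ℝ → ℝ) (hf : ContDiff ℝ (⊤ : ℕ∞) f)
    (hfp : ∀ x, f (x + 2*π) = f x) :
    (∫ θ in (0:ℝ)..(2*π),
        ((deriv (fun x => f (φ x) / Real.sqrt (deriv φ x)) θ)^2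
          - (f (φ θ) / Real.sqrt (deriv φ θ))^2))
      = ∫ θ in (0:ℝ)..(2*π), ((deriv f θ)^2 - (f θ)^2) := by
  set p := deriv φ with hp_def
  have hone : (1:WithTop ℕ∞) ≤ ↑(⊤:ℕ∞) := by exact_mod_cast le_top
  have hphiT : ContDiff ℝ (↑(⊤:ℕ∞)) φ := hφ.of_le (by simp)
  have hφ' : ContDiff ℝ (↑(⊤:ℕ∞)) p := (contDiff_infty_iff_deriv.mp hphiT).2
  set q := deriv p with hq_def
  have hq : ContDiff ℝ (↑(⊤:ℕ∞)) q := (contDiff_infty_iff_deriv.mp hφ').2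
  set r := deriv q with hr_def
  have hp0 : ∀ x, p x ≠ 0 := fun x => (hφd x).ne'
  have hφdiff : ∀ x, HasDerivAt φ (p x) x := fun x =>
    (hφ.differentiable (by simp) x).hasDerivAt
  have hpdiff : ∀ x, HasDerivAt p (q x) x := fun x =>
    (hφ'.differentiable (by simp) x).hasDerivAt
  have hqdiff : ∀ x, HasDerivAt q (r x) x := fun x =>
    (hq.differentiable (by simp) x).hasDerivAt
  have hfdiff : ∀ x, HasDerivAt f (deriv f x) x := fun x =>
    (hf.differentiable (by simp) x).hasDerivAt
  have hi2 : iteratedDeriv 2 φ = q := by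
    rw [show (2:ℕ) = 1 + 1 from rfl, iteratedDeriv_succ, iteratedDeriv_one]
  have hi3 : iteratedDeriv 3 φ = r := by
    rw [show (3:ℕ) = 2 + 1 from rfl, iteratedDeriv_succ, hi2]
  -- rearranged Möbius condition
  have hmob' : ∀ x, r x * p x = 3/2*(q x)^2 + 2*(p x)^2 - 2*(p x)^4 := by
    intro x
    have h := hmob x
    simp only [schwarzian, hi3, hi2, ← hp_def] at h
    have hpx := hp0 x
    field_simp at h
    have h2 : p x * (2*(r x)*(p x) - 3*(q x)^2 + 4*(p x)^4 - 4*(p x)^2) = 0 := by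
      linear_combination (p x) * h
    have h3 := (mul_eq_zero.mp h2).resolve_left hpx
    linarith
  -- square root facts
  set s : ℝ → ℝ := fun x => Real.sqrt (p x) with hs_def
  have hs_sq : ∀ x, (s x)^2 = p x := fun x => Real.sq_sqrt (hφd x).le
  have hs_pos : ∀ x, 0 < s x := fun x => Real.sqrt_pos.mpr (hφd x)
  have hs0 : ∀ x, s x ≠ 0 := fun x => (hs_pos x).ne'
  -- derivative of g
  set G : ℝ → ℝ := fun x =>
    (deriv f (φ x) * p x * s x - f (φ x) * (q x / (2 * s x))) / p x with hG_def
  have hgdiff : ∀ x, HasDerivAt (fun y => f (φ y) / Real.sqrt (p y)) (G x) x := by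
    intro x
    have h1 : HasDerivAt (fun y => f (φ y)) (deriv f (φ x) * p x) x :=
      (hfdiff (φ x)).comp x (hφdiff x)
    have h2 : HasDerivAt (fun y => Real.sqrt (p y)) (q x / (2 * s x)) x := by
      have := (Real.hasDerivAt_sqrt (hp0 x)).comp x (hpdiff x)
      refine this.congr_deriv ?_
      rw [hs_def]
      ring
    have h3 := h1.div h2 (hs0 x)
    refine h3.congr_deriv ?_
    rw [hG_def, hs_sq x]
  have hg_deriv : deriv (fun y => f (φ y) / Real.sqrt (p y)) = G :=
    funext fun x => (hgdiff x).deriv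
  -- auxiliary function H and its derivative Hd
  set H : ℝ → ℝ := fun x => -(1/2) * (f (φ x))^2 * (q x / (p x)^2) with hH_def
  set Hd : ℝ → ℝ := fun x =>
    -(f (φ x) * deriv f (φ x) * q x / p x)
      - 1/2 * (f (φ x))^2 * ((r x * p x - 2 * (q x)^2) / (p x)^3) with hHd_def
  have hHdiff : ∀ x, HasDerivAt H (Hd x) x := by
    intro x
    have h1 : HasDerivAt (fun y => f (φ y)) (deriv f (φ x) * p x) x :=
      (hfdiff (φ x)).comp x (hφdiff x)
    have ha : HasDerivAt (fun y => (f (φ y))^2)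
        ((2:ℕ) * (f (φ x))^(2-1) * (deriv f (φ x) * p x)) x := h1.pow 2
    have hb : HasDerivAt (fun y => q y / (p y)^2)
        ((r x * (p x)^2 - q x * ((2:ℕ) * (p x)^(2-1) * q x)) / ((p x)^2)^2) x :=
      (hqdiff x).div ((hpdiff x).pow 2) (pow_ne_zero 2 (hp0 x))
    have h := (ha.mul hb).const_mul (-(1/2) : ℝ)
    have hHeq : H = fun y => -(1/2) * ((fun y => f (φ y)^2) * fun y => q y / p y^2) y := by
      rw [hH_def]
      funext y
      simp only [Pi.mul_apply]
      ring
    rw [hHeq]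
    refine h.congr_deriv ?_
    · rw [hHd_def]
      have hpx := hp0 x
      push_cast
      field_simp
      ring
  -- continuity facts
  have hpc : Continuous p := hφ'.continuous
  have hqc : Continuous q := hq.continuous
  have hrc : Continuous r := (contDiff_infty_iff_deriv.mp hq).2.continuous
  have hfc : Continuous f := hf.continuous
  have hf'c : Continuous (deriv f) := hf.continuous_deriv (by simp)
  have hφc : Continuous φ := hφ.continuous
  have hsc : Continuous s := Real.continuous_sqrt.comp hpc
  have hGc : Continuous G := by
    apply Continuous.div
    · exact ((hf'c.comp hφc).mul hpc).mul hsc |>.sub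
        ((hfc.comp hφc).mul (hqc.div (continuous_const.mul hsc)
          (fun x => by have := hs_pos x; positivity)))
    · exact hpc
    · exact hp0
  have hHdc : Continuous Hd := by
    apply Continuous.sub
    · exact (((hfc.comp hφc).mul (hf'c.comp hφc)).mul hqc |>.div hpc hp0).neg
    · exact (continuous_const.mul ((hfc.comp hφc).pow 2)).mul
        (((hrc.mul hpc).sub (continuous_const.mul (hqc.pow 2))).div (hpc.pow 3)
          (fun x => pow_ne_zero 3 (hp0 x)))
  -- pointwise identity
  have hpt : ∀ θ, G θ^2 - (f (φ θ) / s θ)^2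
      = ((deriv f (φ θ))^2 - (f (φ θ))^2) * p θ + Hd θ := by
    intro θ
    exact mobius_key_alg (f (φ θ)) (deriv f (φ θ)) (p θ) (q θ) (r θ) (s θ)
      (hs_sq θ) (hs0 θ) (hmob' θ)
  -- periodicity facts
  have hf'per : ∀ x, deriv f (x + 2*π) = deriv f x := by
    intro x
    rw [← deriv_comp_add_const f (2*π) x]
    congr 1
    funext y
    exact hfp y
  have hpper : ∀ x, p (x + 2*π) = p x := by
    intro x
    rw [hp_def, ← deriv_comp_add_const φ (2*π) x]
    have : (fun y => φ (y + 2*π)) = fun y => φ y + 2*π := funext fun y => hφp y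
    rw [this]
    simp
  have hqper : ∀ x, q (x + 2*π) = q x := by
    intro x
    rw [hq_def, ← deriv_comp_add_const p (2*π) x]
    congr 1
    funext y
    exact hpper y
  have hfφper : ∀ x, f (φ (x + 2*π)) = f (φ x) := by
    intro x; rw [hφp x, hfp (φ x)]
  -- rewrite the left integrand
  rw [hg_deriv]
  have : (∫ θ in (0:ℝ)..(2*π), (G θ^2 - (f (φ θ) / s θ)^2))
      = ∫ θ in (0:ℝ)..(2*π),
          (((deriv f (φ θ))^2 - (f (φ θ))^2) * p θ + Hd θ) := by
    apply intervalIntegral.integral_congr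
    intro θ _
    exact hpt θ
  rw [this]
  have hint1 : IntervalIntegrable (fun θ => ((deriv f (φ θ))^2 - (f (φ θ))^2) * p θ)
      MeasureTheory.volume 0 (2*π) :=
    ((((hf'c.comp hφc).pow 2).sub ((hfc.comp hφc).pow 2)).mul hpc).intervalIntegrable _ _
  have hint2 : IntervalIntegrable Hd MeasureTheory.volume 0 (2*π) :=
    hHdc.intervalIntegrable _ _
  rw [intervalIntegral.integral_add hint1 hint2]
  -- ∫ Hd = 0
  have hHint : (∫ θ in (0:ℝ)..(2*π), Hd θ) = 0 := by
    rw [intervalIntegral.integral_eq_sub_of_hasDerivAt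
      (fun x _ => hHdiff x) hint2]
    have : H (2*π) = H 0 := by
      rw [hH_def]
      simp only
      conv_lhs => rw [show (2*π:ℝ) = 0 + 2*π by ring]
      rw [hfφper 0, hpper 0, hqper 0]
    rw [this, sub_self]
  rw [hHint, add_zero]
  -- change of variables
  have hcv : (∫ θ in (0:ℝ)..(2*π), ((deriv f (φ θ))^2 - (f (φ θ))^2) * p θ)
      = ∫ y in (φ 0)..(φ (2*π)), ((deriv f y)^2 - (f y)^2) := by
    rw [show (fun θ => ((deriv f (φ θ))^2 - (f (φ θ))^2) * p θ)
        = fun θ => p θ • (((fun y => (deriv f y)^2 - (f y)^2) ∘ φ) θ) by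
      funext θ; simp [smul_eq_mul]; ring]
    exact intervalIntegral.integral_comp_smul_deriv
      (fun x _ => hφdiff x) (hpc.continuousOn)
      ((hf'c.pow 2).sub (hfc.pow 2))
  rw [hcv]
  have hφ2π : φ (2*π) = φ 0 + 2*π := by
    have := hφp 0
    rwa [zero_add] at this
  rw [hφ2π]
  have hper : Function.Periodic (fun y => (deriv f y)^2 - (f y)^2) (2*π) := by
    intro y
    simp only [hf'per y, hfp y]
  have := hper.intervalIntegral_add_eq (φ 0) 0
  rw [this, zero_add]
end

section
/- Let ψ: ℝ → ℝ be a C¹ lift of a circle diffeomorphism (ψ' > 0, ψ(x+2π) = ψ(x)+2π) satisfying ∫₀^{2π} ψ'(θ) cos θ dθ = 0 and ∫₀^{2π} ψ'(θ) sin θ dθ = 0. Then there exist at least 4 points p ∈ [0, 2π) (distinct modulo 2π) such that ψ(p + π) = ψ(p) + π. -/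
/-!
The balance defect `g θ = ψ (θ + π) - ψ θ - π` is continuous and `π`-antiperiodic, so it vanishes
at some `p ∈ [0, π)`. Integrating by parts, `g' = ψ' (· + π) - ψ'` inherits the vanishing first
Fourier coefficients of `ψ'`, so `g` is orthogonal to every `sin (θ - c)`. By antiperiodicity
`∫₀^{2π} g θ sin (θ - p) = 2 ∫ₚ^{p+π} g θ sin (θ - p)`, and since `sin (θ - p) > 0` on `(p, p + π)`
the function `g` must vanish there as well. This gives two zeros distinct modulo `π`, hence four
distinct modulo `2π`.
-/

open Real Set Function intervalIntegral MeasureTheory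

theorem integral_mul_cos_sub_eq_zero {f : ℝ → ℝ} (hf : IntervalIntegrable f volume 0 (2 * π))
    (hcos : ∫ θ in (0:ℝ)..2 * π, f θ * cos θ = 0)
    (hsin : ∫ θ in (0:ℝ)..2 * π, f θ * sin θ = 0) (c : ℝ) :
    ∫ θ in (0:ℝ)..2 * π, f θ * cos (θ - c) = 0 := by
  have hexpand : ∀ θ, f θ * cos (θ - c) = cos c * (f θ * cos θ) + sin c * (f θ * sin θ) := by
    intro θ; rw [cos_sub]; ring
  simp_rw [hexpand]
  rw [integral_add ((hf.mul_continuousOn continuous_cos.continuousOn).const_mul _)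
    ((hf.mul_continuousOn continuous_sin.continuousOn).const_mul _),
    intervalIntegral.integral_const_mul, intervalIntegral.integral_const_mul, hcos, hsin]
  ring

theorem Function.Periodic.integral_comp_add_mul_cos_sub_eq_zero {f : ℝ → ℝ}
    (hf : Periodic f (2 * π)) (hfc : Continuous f)
    (hcos : ∫ θ in (0:ℝ)..2 * π, f θ * cos θ = 0)
    (hsin : ∫ θ in (0:ℝ)..2 * π, f θ * sin θ = 0) (a c : ℝ) :
    ∫ θ in (0:ℝ)..2 * π, f (θ + a) * cos (θ - c) = 0 := by
  have hperiodic : Periodic (fun u => f u * cos (u - (a + c))) (2 * π) := fun u => by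
    simp only [hf u, add_sub_right_comm u, cos_add_two_pi]
  calc ∫ θ in (0:ℝ)..2 * π, f (θ + a) * cos (θ - c)
      = ∫ θ in (0:ℝ)..2 * π, (fun u => f u * cos (u - (a + c))) (θ + a) := by
        congr 1; ext θ; congr 2; ring
    _ = ∫ u in a..a + 2 * π, f u * cos (u - (a + c)) := by
        rw [integral_comp_add_right (fun u => f u * cos (u - (a + c))), zero_add,
          add_comm (2 * π) a]
    _ = 0 := by
        rw [hperiodic.intervalIntegral_add_eq a 0, zero_add]
        exact integral_mul_cos_sub_eq_zero (hfc.intervalIntegrable _ _) hcos hsin _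

theorem exists_zero_of_integral_mul_eq_zero {f w : ℝ → ℝ} {a b : ℝ} (hab : a < b)
    (hf : ContinuousOn f (Icc a b)) (hw : ContinuousOn w (Icc a b))
    (hw_pos : ∀ x ∈ Ioo a b, 0 < w x) (h : ∫ x in a..b, f x * w x = 0) :
    ∃ x ∈ Ioo a b, f x = 0 := by
  by_contra! hne
  obtain ⟨m, hm⟩ : (Ioo a b).Nonempty := nonempty_Ioo.2 hab
  wlog hfm : 0 < f m generalizing f
  · refine this hf.neg (by simp [neg_mul, h]) (fun x hx => neg_ne_zero.2 (hne x hx)) ?_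
    exact neg_pos.2 ((not_lt.1 hfm).lt_of_ne (hne m hm))
  have hf_pos : ∀ x ∈ Ioo a b, 0 < f x := by
    intro x hx
    by_contra! hfx
    obtain ⟨y, hy, hfy⟩ := isPreconnected_Ioo.intermediate_value hx hm
      (hf.mono Ioo_subset_Icc_self) ⟨hfx, hfm.le⟩
    exact hne y hy hfy
  have := intervalIntegral_pos_of_pos_on (f := fun x => f x * w x)
    ((hf.mul hw).intervalIntegrable_of_Icc hab.le)
    (fun x hx => mul_pos (hf_pos x hx) (hw_pos x hx)) hab
  linarith

noncomputable def balanceDefect (ψ : ℝ → ℝ) (θ : ℝ) : ℝ := ψ (θ + π) - ψ θ - π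

section BalanceDefect

variable {ψ : ℝ → ℝ}

theorem balanceDefect_eq_zero_iff {θ : ℝ} : balanceDefect ψ θ = 0 ↔ ψ (θ + π) = ψ θ + π := by
  rw [balanceDefect, sub_sub, sub_eq_zero]

theorem balanceDefect_antiperiodic (hψp : ∀ x, ψ (x + 2 * π) = ψ x + 2 * π) :
    Antiperiodic (balanceDefect ψ) π := fun θ => by
  simp only [balanceDefect, add_assoc, ← two_mul, hψp]
  ring

theorem continuous_balanceDefect (hψ : Continuous ψ) : Continuous (balanceDefect ψ) := by
  unfold balanceDefect; fun_prop

theorem periodic_deriv_of_add_eq_add_const {T C : ℝ} (h : ∀ x, ψ (x + T) = ψ x + C) :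
    Periodic (deriv ψ) T := fun x => by
  rw [← deriv_comp_add_const, funext h, deriv_add_const]

theorem integral_balanceDefect_mul_sin_sub (hψ : ContDiff ℝ 1 ψ)
    (hψp : ∀ x, ψ (x + 2 * π) = ψ x + 2 * π)
    (hcos : ∫ θ in (0:ℝ)..2 * π, deriv ψ θ * cos θ = 0)
    (hsin : ∫ θ in (0:ℝ)..2 * π, deriv ψ θ * sin θ = 0) (c : ℝ) :
    ∫ θ in (0:ℝ)..2 * π, balanceDefect ψ θ * sin (θ - c) = 0 := by
  have hψ' : Continuous (deriv ψ) := hψ.continuous_deriv le_rfl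
  have hdψ : ∀ x, HasDerivAt ψ (deriv ψ x) x :=
    fun x => (hψ.differentiable one_ne_zero x).hasDerivAt
  have hu : ∀ x, HasDerivAt (balanceDefect ψ) (deriv ψ (x + π) - deriv ψ x) x :=
    fun x => (((hdψ (x + π)).comp_add_const x π).sub (hdψ x)).sub_const π
  have hv : ∀ x, HasDerivAt (fun θ => -cos (θ - c)) (sin (x - c)) x := fun x => by
    simpa using ((hasDerivAt_cos (x - c)).comp_sub_const x c).fun_neg
  have hshift := (periodic_deriv_of_add_eq_add_const hψp).integral_comp_add_mul_cos_sub_eq_zero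
    hψ' hcos hsin π c
  have hunshifted := integral_mul_cos_sub_eq_zero (hψ'.intervalIntegrable _ _) hcos hsin c
  have hbdry : balanceDefect ψ (2 * π) = balanceDefect ψ 0 := by
    simpa using (balanceDefect_antiperiodic hψp).periodic 0
  rw [integral_mul_deriv_eq_deriv_mul (fun x _ => hu x) (fun x _ => hv x)
    ((by fun_prop : Continuous fun x => deriv ψ (x + π) - deriv ψ x).intervalIntegrable _ _)
    ((by fun_prop : Continuous fun x => sin (x - c)).intervalIntegrable _ _)]
  simp only [mul_neg, sub_mul, intervalIntegral.integral_neg]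
  rw [integral_sub
    ((by fun_prop : Continuous fun x => deriv ψ (x + π) * cos (x - c)).intervalIntegrable _ _)
    ((by fun_prop : Continuous fun x => deriv ψ x * cos (x - c)).intervalIntegrable _ _),
    hshift, hunshifted, hbdry, show 2 * π - c = (0 - c) + 2 * π by ring, cos_add_two_pi]
  ring

end BalanceDefect

namespace Function.Antiperiodic

variable {g : ℝ → ℝ}

theorem exists_zero_mem_Ico {c : ℝ} (hg : Antiperiodic g c) (hgc : Continuous g) (hc : 0 < c) :
    ∃ p ∈ Ico 0 c, g p = 0 := by
  have h0 : (0 : ℝ) ∈ uIcc (g 0) (g c) := by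
    rw [hg.eq, mem_uIcc]
    rcases le_total (g 0) 0 with h | h
    · exact Or.inl ⟨h, by linarith⟩
    · exact Or.inr ⟨by linarith, h⟩
  obtain ⟨p, hp, hgp⟩ := intermediate_value_uIcc hgc.continuousOn h0
  rw [uIcc_of_le hc.le] at hp
  rcases hp.2.lt_or_eq with hlt | rfl
  · exact ⟨p, ⟨hp.1, hlt⟩, hgp⟩
  · exact ⟨0, ⟨le_rfl, hc⟩, neg_eq_zero.1 (hg.eq ▸ hgp)⟩

theorem exists_zero_mem_Ioo_of_integral_mul_sin_sub_eq_zero (hg : Antiperiodic g π)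
    (hgc : Continuous g) (p : ℝ) (h : ∫ θ in (0:ℝ)..2 * π, g θ * sin (θ - p) = 0) :
    ∃ q ∈ Ioo p (p + π), g q = 0 := by
  have hper : Periodic (fun θ => g θ * sin (θ - p)) π := hg.mul (sin_antiperiodic.sub_const p)
  have hint : ∀ a b, IntervalIntegrable (fun θ => g θ * sin (θ - p)) volume a b :=
    fun _ _ => (by fun_prop : Continuous fun θ => g θ * sin (θ - p)).intervalIntegrable _ _
  have hhalf : ∫ θ in p..p + π, g θ * sin (θ - p) = 0 := by
    have h2 := hper.intervalIntegral_add_zsmul_eq 2 p hint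
    rw [(hper.zsmul 2).intervalIntegral_add_eq p 0, zero_add] at h2
    simp only [zsmul_eq_mul, Int.cast_ofNat] at h2
    linarith
  exact exists_zero_of_integral_mul_eq_zero (by linarith [pi_pos]) hgc.continuousOn
    (by fun_prop) (fun x hx => sin_pos_of_pos_of_lt_pi (by linarith [hx.1]) (by linarith [hx.2]))
    hhalf

theorem exists_zero_mem_Ico_ne {c p q : ℝ} (hg : Antiperiodic g c) (hp : p ∈ Ico 0 c)
    (hq : q ∈ Ioo p (p + c)) (hgq : g q = 0) : ∃ r ∈ Ico 0 c, r ≠ p ∧ g r = 0 := by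
  rcases lt_or_ge q c with hqc | hqc
  · exact ⟨q, ⟨by linarith [hp.1, hq.1], hqc⟩, hq.1.ne', hgq⟩
  · refine ⟨q - c, ⟨by linarith, by linarith [hp.2, hq.2]⟩, (by linarith [hq.2] : q - c < p).ne, ?_⟩
    rw [hg.sub_eq, hgq, neg_zero]

theorem exists_four_zeros_mem_Ico {c p r : ℝ} (hg : Antiperiodic g c) (hp : p ∈ Ico 0 c)
    (hr : r ∈ Ico 0 c) (hrp : r ≠ p) (hgp : g p = 0) (hgr : g r = 0) :
    ∃ S : Finset ℝ, 4 ≤ S.card ∧ ∀ x ∈ S, x ∈ Ico 0 (2 * c) ∧ g x = 0 := by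
  obtain ⟨hp₀, hpc⟩ := hp
  obtain ⟨hr₀, hrc⟩ := hr
  refine ⟨{p, r, p + c, r + c}, ?_, ?_⟩
  · rw [Finset.card_insert_of_notMem, Finset.card_insert_of_notMem,
      Finset.card_insert_of_notMem, Finset.card_singleton]
    all_goals
      simp only [Finset.mem_insert, Finset.mem_singleton, not_or, add_left_inj]
      and_intros <;> intro h <;> first | exact hrp h.symm | exact hrp h | linarith
  · simp only [Finset.mem_insert, Finset.mem_singleton]
    rintro x (rfl | rfl | rfl | rfl) <;>
      exact ⟨⟨by linarith, by linarith⟩, by simp [hg _, hgp, hgr]⟩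

end Function.Antiperiodic

theorem four_balance_points_general
    (ψ : ℝ → ℝ) (hψ : ContDiff ℝ 1 ψ)
    (hψp : ∀ x, ψ (x + 2*π) = ψ x + 2*π)
    (hcos : ∫ θ in (0:ℝ)..(2*π), deriv ψ θ * Real.cos θ = 0)
    (hsin : ∫ θ in (0:ℝ)..(2*π), deriv ψ θ * Real.sin θ = 0) :
    ∃ S : Finset ℝ, 4 ≤ S.card ∧
      ∀ p ∈ S, p ∈ Set.Ico (0:ℝ) (2*π) ∧ ψ (p + π) = ψ p + π := by
  have hg := balanceDefect_antiperiodic hψp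
  have hgc := continuous_balanceDefect hψ.continuous
  obtain ⟨p, hp, hgp⟩ := hg.exists_zero_mem_Ico hgc pi_pos
  obtain ⟨q, hq, hgq⟩ := hg.exists_zero_mem_Ioo_of_integral_mul_sin_sub_eq_zero hgc p
    (integral_balanceDefect_mul_sin_sub hψ hψp hcos hsin p)
  obtain ⟨r, hr, hrp, hgr⟩ := hg.exists_zero_mem_Ico_ne hp hq hgq
  obtain ⟨S, hS, hzeros⟩ := hg.exists_four_zeros_mem_Ico hp hr hrp hgp hgr
  exact ⟨S, hS, fun x hx => ⟨(hzeros x hx).1, balanceDefect_eq_zero_iff.1 (hzeros x hx).2⟩⟩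

theorem four_balance_points
    (ψ : ℝ → ℝ) (hψ : ContDiff ℝ 1 ψ)
    (hψd : ∀ x, 0 < deriv ψ x)
    (hψp : ∀ x, ψ (x + 2*π) = ψ x + 2*π)
    (hcos : ∫ θ in (0:ℝ)..(2*π), deriv ψ θ * Real.cos θ = 0)
    (hsin : ∫ θ in (0:ℝ)..(2*π), deriv ψ θ * Real.sin θ = 0) :
    ∃ S : Finset ℝ, 4 ≤ S.card ∧
      ∀ p ∈ S, p ∈ Set.Ico (0:ℝ) (2*π) ∧ ψ (p + π) = ψ p + π :=
  four_balance_points_general ψ hψ hψp hcos hsin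
end

section
/- For any n ≥ 1, real C₁, C₂, and θ₀, the function u(θ) = -log( √(1 + C₁² + C₂²) + C₁ cos(nθ) + C₂ sin(nθ) ) is well-defined (the argument of the logarithm is positive) and satisfies ∫₀^{2π} e^{u(θ)} dθ = 2π. -/
open Real

/-!
Since `exp (-log y) = y⁻¹`, the integral is `∫₀^{2π} dθ / (a + C₁ cos nθ + C₂ sin nθ)` with
`a = √(1 + C₁² + C₂²)`. The substitution `x = nθ` and `2π`-periodicity remove `n`, and the
classical identity `∫₀^{2π} dx / (a + C₁ cos x + C₂ sin x) = 2π / √(a² - C₁² - C₂²)`, valid when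
`C₁² + C₂² < a²` (which also gives the positivity), evaluates it to `2π` because the discriminant
`a² - C₁² - C₂²` is `1`.
-/

theorem Function.Periodic.intervalIntegral_comp_natCast_mul {E : Type*} [NormedAddCommGroup E]
    [NormedSpace ℝ E] {f : ℝ → E} {T : ℝ} (hf : Function.Periodic f T)
    (h_int : ∀ t₁ t₂, IntervalIntegrable f MeasureTheory.volume t₁ t₂) {n : ℕ} (hn : n ≠ 0) :
    ∫ x in (0 : ℝ)..T, f (n * x) = ∫ x in (0 : ℝ)..T, f x := by
  have hn' : (n : ℝ) ≠ 0 := Nat.cast_ne_zero.mpr hn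
  have := hf.intervalIntegral_add_zsmul_eq n 0 h_int
  simp only [zero_add, natCast_zsmul] at this
  rw [intervalIntegral.integral_comp_mul_left _ hn', mul_zero, ← nsmul_eq_mul, this,
    ← Nat.cast_smul_eq_nsmul ℝ, inv_smul_smul₀ hn']

theorem mul_cos_add_mul_sin_sq_add_sq (C₁ C₂ x : ℝ) :
    (C₁ * cos x + C₂ * sin x) ^ 2 + (C₁ * sin x - C₂ * cos x) ^ 2 = C₁ ^ 2 + C₂ ^ 2 := by
  linear_combination (C₁ ^ 2 + C₂ ^ 2) * sin_sq_add_cos_sq x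

theorem add_mul_cos_add_mul_sin_pos {a C₁ C₂ : ℝ} (ha : 0 ≤ a) (h : C₁ ^ 2 + C₂ ^ 2 < a ^ 2)
    (x : ℝ) : 0 < a + C₁ * cos x + C₂ * sin x := by
  have hv := mul_cos_add_mul_sin_sq_add_sq C₁ C₂ x
  have : |C₁ * cos x + C₂ * sin x| < a :=
    abs_lt_of_sq_lt_sq (by nlinarith [sq_nonneg (C₁ * sin x - C₂ * cos x)]) ha
  linarith [neg_abs_le (C₁ * cos x + C₂ * sin x)]

theorem continuous_inv_add_mul_cos_add_mul_sin {a C₁ C₂ : ℝ} (ha : 0 ≤ a)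
    (h : C₁ ^ 2 + C₂ ^ 2 < a ^ 2) : Continuous fun x => (a + C₁ * cos x + C₂ * sin x)⁻¹ :=
  Continuous.inv₀ (by fun_prop) fun x => (add_mul_cos_add_mul_sin_pos ha h x).ne'

/-- Unlike the Weierstrass-substitution antiderivative `(2 / k) * arctan (c * tan (x / 2))`, this
one is smooth on all of `ℝ` and increases by exactly `2 * π` over a period, which is all the
fundamental theorem of calculus needs. -/
theorem hasDerivAt_sub_two_mul_arctan {a k C₁ C₂ : ℝ} (ha : 0 ≤ a) (hk : 0 < k)
    (h : k ^ 2 + C₁ ^ 2 + C₂ ^ 2 = a ^ 2) (x : ℝ) :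
    HasDerivAt (fun x => x - 2 * arctan ((C₁ * sin x - C₂ * cos x) /
        (a + k + C₁ * cos x + C₂ * sin x)))
      (k / (a + C₁ * cos x + C₂ * sin x)) x := by
  have hN : HasDerivAt (fun x => C₁ * sin x - C₂ * cos x) (C₁ * cos x + C₂ * sin x) x :=
    (((hasDerivAt_sin x).const_mul C₁).sub ((hasDerivAt_cos x).const_mul C₂)).congr_deriv
      (by ring)
  have hD : HasDerivAt (fun x => a + k + C₁ * cos x + C₂ * sin x)
      (-(C₁ * sin x - C₂ * cos x)) x :=
    ((((hasDerivAt_cos x).const_mul C₁).const_add (a + k)).add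
      ((hasDerivAt_sin x).const_mul C₂)).congr_deriv (by ring)
  have hpos : 0 < a + C₁ * cos x + C₂ * sin x :=
    add_mul_cos_add_mul_sin_pos ha (by linarith [pow_pos hk 2]) x
  have hv := mul_cos_add_mul_sin_sq_add_sq C₁ C₂ x
  set v := C₁ * cos x + C₂ * sin x
  set N := C₁ * sin x - C₂ * cos x
  have hAv : a + C₁ * cos x + C₂ * sin x = a + v := by ring
  have hDv : a + k + C₁ * cos x + C₂ * sin x = a + k + v := by ring
  have hAv0 : a + v ≠ 0 := (hAv ▸ hpos).ne'
  have hDv0 : a + k + v ≠ 0 := by linarith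
  have hak : a + k ≠ 0 := by positivity
  refine ((hasDerivAt_id x).sub
    (((hN.div hD (hDv ▸ hDv0)).arctan).const_mul 2)).congr_deriv ?_
  simp only [Pi.div_apply, hDv, hAv]
  have hden : (a + k + v) ^ 2 + N ^ 2 = 2 * (a + k) * (a + v) := by linear_combination hv + h
  have hnum : v * (a + k + v) - N * -N = (a + k) * (a + v - k) := by linear_combination hv + h
  rw [hnum, div_pow, one_add_div (pow_ne_zero 2 hDv0), hden]
  field_simp
  ring

theorem integral_inv_add_mul_cos_add_mul_sin {a C₁ C₂ : ℝ} (ha : 0 ≤ a)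
    (h : C₁ ^ 2 + C₂ ^ 2 < a ^ 2) :
    ∫ x in (0 : ℝ)..2 * π, (a + C₁ * cos x + C₂ * sin x)⁻¹ =
      2 * π / √(a ^ 2 - C₁ ^ 2 - C₂ ^ 2) := by
  set k := √(a ^ 2 - C₁ ^ 2 - C₂ ^ 2)
  have hk : 0 < k := sqrt_pos.mpr (by linarith)
  have hk2 : k ^ 2 + C₁ ^ 2 + C₂ ^ 2 = a ^ 2 := by
    rw [sq_sqrt (by linarith)]; ring
  have hFTC := intervalIntegral.integral_eq_sub_of_hasDerivAt
    (fun x _ => hasDerivAt_sub_two_mul_arctan ha hk hk2 x)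
    (((continuous_inv_add_mul_cos_add_mul_sin ha h).const_mul k).intervalIntegrable 0 (2 * π))
  simp only [div_eq_mul_inv k, intervalIntegral.integral_const_mul, sin_two_pi, cos_two_pi,
    sin_zero, cos_zero] at hFTC
  rw [eq_div_iff hk.ne', mul_comm, hFTC]
  ring

theorem explicit_solution_normalized_general
    (n : ℕ) (hn : 1 ≤ n) (C₁ C₂ : ℝ) :
    (∀ θ : ℝ, 0 < Real.sqrt (1 + C₁^2 + C₂^2)
        + C₁ * Real.cos (n * θ) + C₂ * Real.sin (n * θ)) ∧
    (∫ θ in (0:ℝ)..(2*π),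
        Real.exp (-Real.log (Real.sqrt (1 + C₁^2 + C₂^2)
          + C₁ * Real.cos (n * θ) + C₂ * Real.sin (n * θ))) = 2*π) := by
  set a := √(1 + C₁ ^ 2 + C₂ ^ 2)
  have ha : 0 ≤ a := sqrt_nonneg _
  have ha2 : a ^ 2 = 1 + C₁ ^ 2 + C₂ ^ 2 := sq_sqrt (by positivity)
  have hlt : C₁ ^ 2 + C₂ ^ 2 < a ^ 2 := by linarith
  have hpos (θ : ℝ) := add_mul_cos_add_mul_sin_pos ha hlt (n * θ)
  refine ⟨hpos, ?_⟩
  have hper : Function.Periodic (fun x => (a + C₁ * cos x + C₂ * sin x)⁻¹) (2 * π) := by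
    intro x
    simp only [cos_add_two_pi, sin_add_two_pi]
  calc ∫ θ in (0 : ℝ)..2 * π, exp (-log (a + C₁ * cos (n * θ) + C₂ * sin (n * θ)))
      = ∫ θ in (0 : ℝ)..2 * π, (a + C₁ * cos (n * θ) + C₂ * sin (n * θ))⁻¹ :=
        intervalIntegral.integral_congr fun θ _ => by simp only [exp_neg, exp_log (hpos θ)]
    _ = ∫ x in (0 : ℝ)..2 * π, (a + C₁ * cos x + C₂ * sin x)⁻¹ :=
        hper.intervalIntegral_comp_natCast_mul
          (fun _ _ => (continuous_inv_add_mul_cos_add_mul_sin ha hlt).intervalIntegrable _ _)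
          (by omega)
    _ = 2 * π := by
        have hdisc : a ^ 2 - C₁ ^ 2 - C₂ ^ 2 = 1 := by linarith
        rw [integral_inv_add_mul_cos_add_mul_sin ha hlt, hdisc, sqrt_one, div_one]

theorem explicit_solution_normalized
    (n : ℕ) (hn : 1 ≤ n) (C₁ C₂ θ₀ : ℝ) :
    (∀ θ : ℝ, 0 < Real.sqrt (1 + C₁^2 + C₂^2)
        + C₁ * Real.cos (n * θ) + C₂ * Real.sin (n * θ)) ∧
    (∫ θ in (0:ℝ)..(2*π),
        Real.exp (-Real.log (Real.sqrt (1 + C₁^2 + C₂^2)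
          + C₁ * Real.cos (n * θ) + C₂ * Real.sin (n * θ))) = 2*π) :=
  explicit_solution_normalized_general n hn C₁ C₂
end

section
/- Let φ: ℝ → ℝ be a smooth lift of a circle diffeomorphism with inverse ψ, and let f: ℝ → ℝ be smooth and 2π-periodic. Then ∫₀^{2π} ((f∘ψ)')² + (ψ')²(f∘ψ)² - (f∘ψ)² dθ = ∫₀^{2π} (f')²/φ' + f²/φ' - φ' f² dθ. -/
open Real

set_option maxHeartbeats 1000000 in
theorem spectral_duality
    (φ ψ : ℝ → ℝ)
    (hφ : ContDiff ℝ (⊤ : ℕ∞) φ) (hφd : ∀ x, 0 < deriv φ x)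
    (hφp : ∀ x, φ (x + 2*π) = φ x + 2*π)
    (hleft : ∀ x, ψ (φ x) = x) (hright : ∀ x, φ (ψ x) = x)
    (f : ℝ → ℝ) (hf : ContDiff ℝ (⊤ : ℕ∞) f)
    (hfp : ∀ x, f (x + 2*π) = f x) :
    (∫ θ in (0:ℝ)..(2*π),
        ((deriv (fun x => f (ψ x)) θ)^2
          + (deriv ψ θ)^2 * (f (ψ θ))^2 - (f (ψ θ))^2))
      = ∫ θ in (0:ℝ)..(2*π),
        ((deriv f θ)^2 / deriv φ θ + (f θ)^2 / deriv φ θ - deriv φ θ * (f θ)^2) := by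
  have hφdiff : Differentiable ℝ φ := hφ.differentiable (by simp)
  have hfdiff : Differentiable ℝ f := hf.differentiable (by simp)
  have hφc : Continuous (deriv φ) := ((hφ.of_le (by simp) : ContDiff ℝ 1 φ).continuous_deriv le_rfl)
  have hfc : Continuous (deriv f) := ((hf.of_le (by simp) : ContDiff ℝ 1 f).continuous_deriv le_rfl)
  have hφne : ∀ x, deriv φ x ≠ 0 := fun x => (hφd x).ne'
  -- ψ is continuous
  have hmono : StrictMono φ := strictMono_of_deriv_pos hφd
  have hsurj : Function.Surjective φ := fun y => ⟨ψ y, hright y⟩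
  have hψcont : Continuous ψ := by
    let e : ℝ ≃o ℝ := StrictMono.orderIsoOfSurjective φ hmono hsurj
    have hψeq : ψ = ⇑e.symm := by
      funext x
      have h1 : φ (e.symm x) = x := e.apply_symm_apply x
      calc ψ x = ψ (φ (e.symm x)) := by rw [h1]
        _ = e.symm x := hleft _
    rw [hψeq]
    exact e.symm.continuous
  -- derivative of ψ
  have hψd : ∀ θ, HasDerivAt ψ ((deriv φ (ψ θ))⁻¹) θ := by
    intro θ
    exact HasDerivAt.of_local_left_inverse hψcont.continuousAt
      (hφdiff (ψ θ)).hasDerivAt (hφne _) (Filter.Eventually.of_forall hright)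
  have hψd' : ∀ θ, deriv ψ θ = (deriv φ (ψ θ))⁻¹ := fun θ => (hψd θ).deriv
  have hfψd : ∀ θ, HasDerivAt (fun x => f (ψ x))
      (deriv f (ψ θ) * (deriv φ (ψ θ))⁻¹) θ := by
    intro θ
    exact (hfdiff (ψ θ)).hasDerivAt.comp θ (hψd θ)
  have hfψd' : ∀ θ, deriv (fun x => f (ψ x)) θ = deriv f (ψ θ) * (deriv φ (ψ θ))⁻¹ :=
    fun θ => (hfψd θ).deriv
  -- the LHS integrand
  set g : ℝ → ℝ := fun θ => (deriv (fun x => f (ψ x)) θ)^2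
      + (deriv ψ θ)^2 * (f (ψ θ))^2 - (f (ψ θ))^2 with hg
  have hgc : Continuous g := by
    have h1 : Continuous fun θ => deriv f (ψ θ) * (deriv φ (ψ θ))⁻¹ :=
      (hfc.comp hψcont).mul ((hφc.comp hψcont).inv₀ (fun θ => hφne _))
    have h2 : Continuous fun θ => deriv (fun x => f (ψ x)) θ := by
      simpa only [← hfψd'] using h1
    have h3 : Continuous (deriv ψ) := by
      have : Continuous fun θ => (deriv φ (ψ θ))⁻¹ :=
        (hφc.comp hψcont).inv₀ (fun θ => hφne _)
      simpa only [← hψd'] using this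
    exact ((h2.pow 2).add ((h3.pow 2).mul (((hf.continuous.comp hψcont)).pow 2))).sub
      ((hf.continuous.comp hψcont).pow 2)
  -- periodicity
  have hψp : ∀ x, ψ (x + 2*π) = ψ x + 2*π := by
    intro x
    have : φ (ψ x + 2*π) = x + 2*π := by rw [hφp, hright]
    rw [← this, hleft]
  have hφdp : ∀ x, deriv φ (x + 2*π) = deriv φ x := by
    intro x
    have h1 : deriv (fun y => φ (y + 2*π)) x = deriv φ (x + 2*π) := by
      simpa using deriv_comp_add_const φ (2*π) x
    have h2 : (fun y => φ (y + 2*π)) = fun y => φ y + 2*π := funext hφp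
    rw [h2] at h1
    rw [← h1, deriv_add_const]
  have hfdp : ∀ x, deriv f (x + 2*π) = deriv f x := by
    intro x
    have h1 : deriv (fun y => f (y + 2*π)) x = deriv f (x + 2*π) := by
      simpa using deriv_comp_add_const f (2*π) x
    have h2 : (fun y => f (y + 2*π)) = fun y => f y + 0 := by
      funext y; rw [hfp, add_zero]
    rw [h2] at h1
    rw [← h1, deriv_add_const]
  have hgp : Function.Periodic g (2*π) := by
    intro θ
    simp only [hg, hfψd', hψd', hψp, hφdp, hfdp, hfp]
  -- substitution
  have hsub : (∫ x in (0:ℝ)..(2*π), deriv φ x • g (φ x)) = ∫ θ in (φ 0)..(φ (2*π)), g θ := by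
    exact intervalIntegral.integral_comp_smul_deriv (f := φ) (f' := deriv φ) (g := g)
      (a := 0) (b := 2*π) (fun x _ => (hφdiff x).hasDerivAt) hφc.continuousOn hgc
  have hφ2π : φ (2*π) = φ 0 + 2*π := by simpa using hφp 0
  have hshift : (∫ θ in (φ 0)..(φ (2*π)), g θ) = ∫ θ in (0:ℝ)..(2*π), g θ := by
    rw [hφ2π]
    simpa using hgp.intervalIntegral_add_eq (φ 0) 0
  -- pointwise identity
  have hpt : ∀ x, deriv φ x • g (φ x)
      = (deriv f x)^2 / deriv φ x + (f x)^2 / deriv φ x - deriv φ x * (f x)^2 := by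
    intro x
    have hx := hφne x
    simp only [hg, hfψd', hψd', hleft, smul_eq_mul]
    field_simp
  calc (∫ θ in (0:ℝ)..(2*π), g θ)
      = ∫ θ in (φ 0)..(φ (2*π)), g θ := hshift.symm
    _ = ∫ x in (0:ℝ)..(2*π), deriv φ x • g (φ x) := hsub.symm
    _ = ∫ x in (0:ℝ)..(2*π),
        ((deriv f x)^2 / deriv φ x + (f x)^2 / deriv φ x - deriv φ x * (f x)^2) := by
        simp only [hpt]
end
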